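/- Let F, f : ℝⁿ → ℝⁿ be C^∞ vector fields, φ : ℝⁿ → ℝ a C^∞ function, j ∈ ℕ, and U ⊆ ℝⁿ an open set such that for every r < j and every y ∈ U one has Dφ(y)((ad_F^r f)(y)) = 0. Then for every x ∈ U, Dφ(x)((ad_F^j f)(x)) = (−1)^j (L_f(L_F^j φ))(x). -/

import Mathlib

open VectorField

/-- Iterated Lie bracket (adjoint action): `adIter F f 0 = f`,
`adIter F f (j+1) = [F, adIter F f j]`. -/
noncomputable def adIter {E : Type*} [NormedAddCommGroup E] [NormedSpace ℝ E]
    (F f : E → E) : ℕ → E → E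
  | 0 => f
  | j + 1 => lieBracket ℝ F (adIter F f j)

/-- Lie derivative of a scalar function along a vector field: `(L_V φ)(x) = Dφ(x)(V(x))`. -/
noncomputable def lieD {E : Type*} [NormedAddCommGroup E] [NormedSpace ℝ E]
    (V : E → E) (φ : E → ℝ) : E → ℝ :=
  fun x => fderiv ℝ φ x (V x)

/-- Iterated Lie derivative: `L_V^0 φ = φ`, `L_V^{j+1} φ = L_V (L_V^j φ)`. -/
noncomputable def lieDIter {E : Type*} [NormedAddCommGroup E] [NormedSpace ℝ E]
    (V : E → E) (φ : E → ℝ) : ℕ → E → ℝ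
  | 0 => φ
  | j + 1 => lieD V (lieDIter V φ j)

section Aux

variable {E : Type*} [NormedAddCommGroup E] [NormedSpace ℝ E]

lemma contDiff_adIter {F f : E → E} (hF : ContDiff ℝ (⊤ : ℕ∞) F) (hf : ContDiff ℝ (⊤ : ℕ∞) f) (j : ℕ) :
    ContDiff ℝ (⊤ : ℕ∞) (adIter F f j) := by
  induction j with
  | zero => exact hf
  | succ j ih => exact hF.lieBracket_vectorField ih (by simp)

lemma contDiff_lieD {V : E → E} {φ : E → ℝ} (hV : ContDiff ℝ (⊤ : ℕ∞) V) (hφ : ContDiff ℝ (⊤ : ℕ∞) φ) :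
    ContDiff ℝ (⊤ : ℕ∞) (lieD V φ) :=
  (hφ.fderiv_right (by simp)).clm_apply hV

lemma lieDIter_lieD (V : E → E) (φ : E → ℝ) (j : ℕ) :
    lieDIter V (lieD V φ) j = lieDIter V φ (j + 1) := by
  induction j with
  | zero => rfl
  | succ j ih => show lieD V _ = lieD V _; rw [ih]

/-- Key identity: `L_{[F,W]} φ = L_F (L_W φ) - L_W (L_F φ)`. -/
lemma fderiv_apply_lieBracket {F W : E → E} {φ : E → ℝ}
    (hF : ContDiff ℝ (⊤ : ℕ∞) F) (hW : ContDiff ℝ (⊤ : ℕ∞) W) (hφ : ContDiff ℝ (⊤ : ℕ∞) φ) (x : E) :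
    fderiv ℝ φ x (lieBracket ℝ F W x) =
      fderiv ℝ (lieD W φ) x (F x) - fderiv ℝ (lieD F φ) x (W x) := by
  have hdφ : ContDiff ℝ (⊤ : ℕ∞) (fderiv ℝ φ) := hφ.fderiv_right (by simp)
  have h1 : fderiv ℝ (lieD W φ) x =
      (fderiv ℝ φ x).comp (fderiv ℝ W x) + (fderiv ℝ (fderiv ℝ φ) x).flip (W x) :=
    fderiv_clm_apply (hdφ.differentiable (by simp)).differentiableAt
      (hW.differentiable (by simp)).differentiableAt
  have h2 : fderiv ℝ (lieD F φ) x =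
      (fderiv ℝ φ x).comp (fderiv ℝ F x) + (fderiv ℝ (fderiv ℝ φ) x).flip (F x) :=
    fderiv_clm_apply (hdφ.differentiable (by simp)).differentiableAt
      (hF.differentiable (by simp)).differentiableAt
  have hsymm : fderiv ℝ (fderiv ℝ φ) x (F x) (W x) = fderiv ℝ (fderiv ℝ φ) x (W x) (F x) :=
    (hφ.contDiffAt.isSymmSndFDerivAt (by rw [minSmoothness_of_isRCLikeNormedField]; exact WithTop.coe_le_coe.mpr (le_top : (2 : ℕ∞) ≤ ⊤))).eq _ _
  have : lieBracket ℝ F W x = fderiv ℝ W x (F x) - fderiv ℝ F x (W x) := rfl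
  rw [this, h1, h2]
  simp only [ContinuousLinearMap.add_apply, ContinuousLinearMap.comp_apply,
    ContinuousLinearMap.flip_apply, map_sub]
  rw [hsymm]
  ring

end Aux

/-- Generalized version with `φ` universally quantified, proved by induction on `j`. -/
lemma lieDeriv_adIter_aux
    {E : Type*} [NormedAddCommGroup E] [NormedSpace ℝ E]
    (F f : E → E) (hF : ContDiff ℝ (⊤ : ℕ∞) F) (hf : ContDiff ℝ (⊤ : ℕ∞) f)
    (j : ℕ) (U : Set E) (hU : IsOpen U) :
    ∀ φ : E → ℝ, ContDiff ℝ (⊤ : ℕ∞) φ →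
      (∀ r < j, ∀ y ∈ U, fderiv ℝ φ y (adIter F f r y) = 0) →
      ∀ x ∈ U, fderiv ℝ φ x (adIter F f j x) = (-1 : ℝ) ^ j * lieD f (lieDIter F φ j) x := by
  induction j with
  | zero =>
    intro φ hφ _ x hx
    simp [lieD, lieDIter, adIter]
  | succ j ih =>
    intro φ hφ hann x hx
    have hW : ContDiff ℝ (⊤ : ℕ∞) (adIter F f j) := contDiff_adIter hF hf j
    -- L_{ad^j} φ vanishes on U, so its derivative along F vanishes on U
    have hzero : ∀ y ∈ U, lieD (adIter F f j) φ y = 0 := fun y hy =>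
      hann j (Nat.lt_succ_self j) y hy
    have hder0 : fderiv ℝ (lieD (adIter F f j) φ) x (F x) = 0 := by
      have : fderiv ℝ (lieD (adIter F f j) φ) x = fderiv ℝ (fun _ : E => (0 : ℝ)) x := by
        apply Filter.EventuallyEq.fderiv_eq
        filter_upwards [hU.mem_nhds hx] with y hy using hzero y hy
      rw [this, fderiv_fun_const]
      simp
    -- main identity
    have hkey : fderiv ℝ φ x (adIter F f (j + 1) x) =
        - fderiv ℝ (lieD F φ) x (adIter F f j x) := by
      have := fderiv_apply_lieBracket hF hW hφ (x := x)
      show fderiv ℝ φ x (lieBracket ℝ F (adIter F f j) x) = _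
      rw [this, hder0]
      ring
    -- apply IH to φ' = L_F φ
    have hφ' : ContDiff ℝ (⊤ : ℕ∞) (lieD F φ) := contDiff_lieD hF hφ
    have hann' : ∀ r < j, ∀ y ∈ U, fderiv ℝ (lieD F φ) y (adIter F f r y) = 0 := by
      intro r hr y hy
      have hWr : ContDiff ℝ (⊤ : ℕ∞) (adIter F f r) := contDiff_adIter hF hf r
      -- L_{ad^r}(L_F φ) = L_F(L_{ad^r} φ) - L_{ad^{r+1}} φ, both vanish on U
      have hbr := fderiv_apply_lieBracket hF hWr hφ (x := y)
      have h1 : fderiv ℝ φ y (lieBracket ℝ F (adIter F f r) y) = 0 :=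
        hann (r + 1) (Nat.succ_lt_succ hr) y hy
      have h2 : fderiv ℝ (lieD (adIter F f r) φ) y (F y) = 0 := by
        have hz0 : ∀ z ∈ U, lieD (adIter F f r) φ z = 0 := fun z hz =>
          hann r (hr.trans (Nat.lt_succ_self j)) z hz
        have : fderiv ℝ (lieD (adIter F f r) φ) y = fderiv ℝ (fun _ : E => (0 : ℝ)) y := by
          apply Filter.EventuallyEq.fderiv_eq
          filter_upwards [hU.mem_nhds hy] with z hz using hz0 z hz
        rw [this, fderiv_fun_const]
        simp
      rw [hbr, h2] at h1
      linarith
    have hIH := ih (lieD F φ) hφ' hann' x hx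
    rw [hkey, hIH, lieDIter_lieD]
    have : lieDIter F φ (j + 1) = lieD F (lieDIter F φ j) := rfl
    rw [pow_succ]
    ring

/-- If `φ` is annihilated on an open set `U` by the iterated brackets
`ad_F^r f` for all `r < j`, then `L_{ad_F^j f} φ = (-1)^j L_f (L_F^j φ)` on `U`. -/
theorem lieDeriv_adIter_of_annihilated
    (n : ℕ) (F f : EuclideanSpace ℝ (Fin n) → EuclideanSpace ℝ (Fin n))
    (φ : EuclideanSpace ℝ (Fin n) → ℝ)
    (hF : ContDiff ℝ (⊤ : ℕ∞) F) (hf : ContDiff ℝ (⊤ : ℕ∞) f) (hφ : ContDiff ℝ (⊤ : ℕ∞) φ)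
    (j : ℕ) (U : Set (EuclideanSpace ℝ (Fin n))) (hU : IsOpen U)
    (hann : ∀ r < j, ∀ y ∈ U, fderiv ℝ φ y (adIter F f r y) = 0) :
    ∀ x ∈ U,
      fderiv ℝ φ x (adIter F f j x) = (-1 : ℝ) ^ j * lieD f (lieDIter F φ j) x :=
  lieDeriv_adIter_aux F f hF hf j U hU φ hφ hann
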